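/- Let E and F be completely integrable distributions (involutive subbundles, treated as Lie subalgebras of vector fields) with E ∩ F = 0, and define inductively F^{-1} = F, F^i = {Y ∈ F^{i-1} : [Y, E] ⊆ F^{i-1} + E} for i ≥ 0. Then each F^i is closed under Lie bracket (involutive). -/

import Mathlib

/-- One step of the Freeman filtration: given `E` and the previous term `S`,
the next term is `{Y ∈ S : ⁅Y, E⁆ ⊆ S + E}`. -/
def freemanStep {k L : Type*} [Field k] [LieRing L] [LieAlgebra k L]
    (E S : Submodule k L) : Submodule k L where
  carrier := {Y | Y ∈ S ∧ ∀ X ∈ E, ⁅Y, X⁆ ∈ S ⊔ E}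
  add_mem' := by
    intro a b ha hb
    refine ⟨S.add_mem ha.1 hb.1, fun X hX => ?_⟩
    rw [add_lie]
    exact Submodule.add_mem _ (ha.2 X hX) (hb.2 X hX)
  zero_mem' := by
    refine ⟨S.zero_mem, fun X hX => ?_⟩
    rw [zero_lie]; exact Submodule.zero_mem _
  smul_mem' := by
    intro c a ha
    refine ⟨S.smul_mem c ha.1, fun X hX => ?_⟩
    rw [smul_lie]
    exact Submodule.smul_mem _ c (ha.2 X hX)

/-- The Freeman filtration `F^{-1} = F`, `F^i = {Y ∈ F^{i-1} : ⁅Y, E⁆ ⊆ F^{i-1} + E}`,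
indexed so that `freemanFilt E F n = F^{n-1}`. -/
def freemanFilt {k L : Type*} [Field k] [LieRing L] [LieAlgebra k L]
    (E F : Submodule k L) : ℕ → Submodule k L
  | 0 => F
  | n + 1 => freemanStep E (freemanFilt E F n)

section FreemanStep

variable {k L : Type*} [Field k] [LieRing L] [LieAlgebra k L] {E S : Submodule k L}

theorem lie_mem_sup_of_mem_freemanStep (hS : ∀ Y ∈ S, ∀ Z ∈ S, ⁅Y, Z⁆ ∈ S) {W V : L}
    (hW : W ∈ freemanStep E S) (hV : V ∈ S ⊔ E) : ⁅W, V⁆ ∈ S ⊔ E := by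
  obtain ⟨s, hs, e, he, rfl⟩ := Submodule.mem_sup.mp hV
  rw [lie_add]
  exact Submodule.add_mem _ (Submodule.mem_sup_left (hS W hW.1 s hs)) (hW.2 e he)

theorem lie_mem_freemanStep (hS : ∀ Y ∈ S, ∀ Z ∈ S, ⁅Y, Z⁆ ∈ S) {Y Z : L}
    (hY : Y ∈ freemanStep E S) (hZ : Z ∈ freemanStep E S) : ⁅Y, Z⁆ ∈ freemanStep E S := by
  refine ⟨hS Y hY.1 Z hZ.1, fun X hX => ?_⟩
  rw [lie_lie]
  exact Submodule.sub_mem _ (lie_mem_sup_of_mem_freemanStep hS hY (hZ.2 X hX))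
    (lie_mem_sup_of_mem_freemanStep hS hZ (hY.2 X hX))

end FreemanStep

theorem stmt14_general (k L : Type*) [Field k] [LieRing L] [LieAlgebra k L]
    (E F : LieSubalgebra k L) :
    ∀ n : ℕ, ∀ Y Z : L, Y ∈ freemanFilt E.toSubmodule F.toSubmodule n →
      Z ∈ freemanFilt E.toSubmodule F.toSubmodule n →
      ⁅Y, Z⁆ ∈ freemanFilt E.toSubmodule F.toSubmodule n := by
  intro n
  induction n with
  | zero => exact fun Y Z hY hZ => F.lie_mem hY hZ
  | succ n ih => exact fun Y Z => lie_mem_freemanStep fun Y hY Z hZ => ih Y Z hY hZ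

/-- Let `E`, `F` be Lie subalgebras (completely integrable
distributions) of a Lie algebra `L` with `E ∩ F = 0`, and define inductively
`F^{-1} = F`, `F^i = {Y ∈ F^{i-1} : [Y, E] ⊆ F^{i-1} + E}` for `i ≥ 0`.  Then each
`F^i` is closed under the Lie bracket (involutive). -/
theorem stmt14 (k L : Type*) [Field k] [CharZero k] [LieRing L] [LieAlgebra k L]
    (E F : LieSubalgebra k L) (hEF : E.toSubmodule ⊓ F.toSubmodule = ⊥) :
    ∀ n : ℕ, ∀ Y Z : L, Y ∈ freemanFilt E.toSubmodule F.toSubmodule n →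
      Z ∈ freemanFilt E.toSubmodule F.toSubmodule n →
      ⁅Y, Z⁆ ∈ freemanFilt E.toSubmodule F.toSubmodule n :=
  stmt14_general k L E F
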